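/- For all θ ∈ ℓ̄₁(Λ), one has H_ε(θ) − H_ε(θ^ε) ≤ (1/ε) ‖θ − θ^ε‖²_{ℓ1}. -/

import Mathlib

open MeasureTheory Complex Filter Topology

set_option maxHeartbeats 1000000

noncomputable section

/-- Frequencies: `Λ = ℤ^d \ {0}`. -/
abbrev Lam (d : ℕ) := {v : Fin d → ℤ // v ≠ 0}

/-- Negation on `Λ`. -/
def negL {d : ℕ} (l : Lam d) : Lam d := ⟨-l.1, by simpa using l.2⟩

/-- Fourier character `φ_λ(x) = exp(2πi⟨λ,x⟩)`. -/
def phiF {d : ℕ} (l : Lam d) (x : Fin d → ℝ) : ℂ :=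
  Complex.exp (2 * (Real.pi : ℂ) * Complex.I * (∑ i, (l.1 i : ℂ) * (x i : ℂ)))

/-- The real Banach space `ℓ̄₁(Λ)` of complex summable sequences with
`θ_{-λ} = conj (θ_λ)`, as a real submodule of `ℓ¹(Λ; ℂ)`. -/
def SymmL1 (d : ℕ) : Submodule ℝ (lp (fun _ : Lam d => ℂ) 1) where
  carrier := {θ | ∀ l, θ (negL l) = starRingEnd ℂ (θ l)}
  add_mem' := by
    intro a b ha hb l
    simp only [lp.coeFn_add, Pi.add_apply, map_add, ha l, hb l]
  zero_mem' := by
    intro l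
    simp [lp.coeFn_zero]
  smul_mem' := by
    intro r a ha l
    simp only [lp.coeFn_smul, Pi.smul_apply, ha l, Complex.real_smul, map_mul,
      Complex.conj_ofReal]

instance (d : ℕ) : NormedAddCommGroup (SymmL1 d) := inferInstance

instance (d : ℕ) : NormedSpace ℝ (SymmL1 d) := inferInstance

/-- The `λ`-th coefficient of an element of `ℓ̄₁(Λ)`. -/
def coeffL {d : ℕ} (θ : SymmL1 d) (l : Lam d) : ℂ := (θ : lp (fun _ : Lam d => ℂ) 1) l

/-- The unit cube `𝒳 = [0,1]^d`. -/
def cube (d : ℕ) : Set (Fin d → ℝ) := Set.Icc 0 1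

/-- The uniform probability measure on the unit cube. -/
def muU (d : ℕ) : Measure (Fin d → ℝ) := volume.restrict (cube d)

/-- `u_θ(x) = Σ_λ θ_λ φ_λ(x)` (a real number thanks to the symmetry of `θ`). -/
def uFun {d : ℕ} (θ : SymmL1 d) (x : Fin d → ℝ) : ℝ :=
  (∑' l : Lam d, coeffL θ l * phiF l x).re

/-- `h_ε(θ, y)`. -/
def hEps {d : ℕ} (ε : ℝ) (c : (Fin d → ℝ) → (Fin d → ℝ) → ℝ)
    (θ : SymmL1 d) (y : Fin d → ℝ) : ℝ :=
  ε * Real.log (∫ x, Real.exp ((uFun θ x - c x y) / ε) ∂muU d) + ε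

/-- `H_ε(θ) = ∫ h_ε(θ, y) dν(y)`. -/
def HEps {d : ℕ} (ε : ℝ) (c : (Fin d → ℝ) → (Fin d → ℝ) → ℝ)
    (ν : Measure (Fin d → ℝ)) (θ : SymmL1 d) : ℝ :=
  ∫ y, hEps ε c θ y ∂ν

/-- The probability density `F_{θ,y}`. -/
def Fdens {d : ℕ} (ε : ℝ) (c : (Fin d → ℝ) → (Fin d → ℝ) → ℝ)
    (θ : SymmL1 d) (y : Fin d → ℝ) (x : Fin d → ℝ) : ℝ :=
  Real.exp ((uFun θ x - c x y) / ε) /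
    ∫ x', Real.exp ((uFun θ x' - c x' y) / ε) ∂muU d

/-- `g_λ(θ,y) = ∫ conj(φ_λ) F_{θ,y} dμ`, the `λ`-th partial derivative of `h_ε(·,y)`. -/
def gradC {d : ℕ} (ε : ℝ) (c : (Fin d → ℝ) → (Fin d → ℝ) → ℝ)
    (θ : SymmL1 d) (y : Fin d → ℝ) (l : Lam d) : ℂ :=
  ∫ x, starRingEnd ℂ (phiF l x) * (Fdens ε c θ y x : ℂ) ∂muU d

/-! Write `θ = θε + δ`. Minimality gives `H_ε(θε - δ) ≥ H_ε(θε)`, so it suffices to bound the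
second difference `H_ε(θε + δ) + H_ε(θε - δ) - 2 H_ε(θε)` by `‖δ‖² / ε`. For fixed `y`, let `P` be
`μ` tilted by `(u_{θε} - c(·, y)) / ε`; the second difference of `h_ε(·, y)` is then
`ε (log E_P[e^X] + log E_P[e^{-X}])` with `X = u_δ / ε` and `|X| ≤ ‖δ‖ / ε`, and Hoeffding's lemma
bounds it by `‖δ‖² / ε`. The same tilting shows that `h_ε(·, y)` is `1`-Lipschitz in `θ`, so
integrability in `y` passes between `θε` and `θε ± δ`. -/

open ProbabilityTheory
open scoped NNReal

section LogIntegralExp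

variable {α : Type*} [MeasurableSpace α] {μ : Measure α} {g w : α → ℝ} {a : ℝ}

lemma integrable_exp_of_abs_le [IsFiniteMeasure μ] (hw : AEStronglyMeasurable w μ)
    (hwa : ∀ x, |w x| ≤ a) : Integrable (fun x => Real.exp (w x)) μ :=
  (integrable_const (Real.exp a)).mono' (Real.continuous_exp.comp_aestronglyMeasurable hw)
    (Eventually.of_forall fun x => by simpa [Real.abs_exp] using le_of_abs_le (hwa x))

lemma integrable_exp_add_of_abs_le (hg : Integrable (fun x => Real.exp (g x)) μ)
    (hw : AEStronglyMeasurable w μ) (hwa : ∀ x, |w x| ≤ a) :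
    Integrable (fun x => Real.exp (g x + w x)) μ := by
  refine (hg.bdd_mul (c := Real.exp a) (Real.continuous_exp.comp_aestronglyMeasurable hw)
    (Eventually.of_forall fun x => ?_)).congr (Eventually.of_forall fun x => ?_)
  · simpa [Real.abs_exp] using le_of_abs_le (hwa x)
  · simp [Real.exp_add, mul_comm]

lemma integrable_exp_add_iff (hw : AEStronglyMeasurable w μ) (hwa : ∀ x, |w x| ≤ a) :
    Integrable (fun x => Real.exp (g x + w x)) μ ↔ Integrable (fun x => Real.exp (g x)) μ :=
  ⟨fun h => by simpa using integrable_exp_add_of_abs_le h hw.neg (by simpa using hwa),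
    fun h => integrable_exp_add_of_abs_le h hw hwa⟩

lemma log_integral_exp_add [NeZero μ] (hg : Integrable (fun x => Real.exp (g x)) μ)
    (hgw : Integrable (fun x => Real.exp (g x + w x)) μ) :
    Real.log (∫ x, Real.exp (g x + w x) ∂μ)
      = Real.log (∫ x, Real.exp (g x) ∂μ) + Real.log (∫ x, Real.exp (w x) ∂μ.tilted g) := by
  rw [integral_exp_tilted]
  simp only [Pi.add_apply]
  rw [Real.log_div (integral_exp_pos hgw).ne' (integral_exp_pos hg).ne']
  ring

lemma abs_log_integral_exp_le [IsProbabilityMeasure μ] (hw : AEStronglyMeasurable w μ)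
    (hwa : ∀ x, |w x| ≤ a) : |Real.log (∫ x, Real.exp (w x) ∂μ)| ≤ a := by
  have hint := integrable_exp_of_abs_le hw hwa
  have hlow : Real.exp (-a) ≤ ∫ x, Real.exp (w x) ∂μ := by
    simpa using integral_mono (integrable_const _) hint
      fun x => Real.exp_le_exp.2 (neg_le_of_abs_le (hwa x))
  have hup : ∫ x, Real.exp (w x) ∂μ ≤ Real.exp a := by
    simpa using integral_mono hint (integrable_const _)
      fun x => Real.exp_le_exp.2 (le_of_abs_le (hwa x))
  have hpos := (Real.exp_pos (-a)).trans_le hlow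
  rw [abs_le, Real.le_log_iff_exp_le hpos, Real.log_le_iff_le_exp hpos]
  exact ⟨hlow, hup⟩

lemma cgf_one_add_cgf_neg_one_le [IsProbabilityMeasure μ] (hw : AEMeasurable w μ)
    (hwa : ∀ x, |w x| ≤ a) : cgf w μ 1 + cgf w μ (-1) ≤ a ^ 2 := by
  have ha : 0 ≤ a := (abs_nonneg _).trans (hwa (nonempty_of_isProbabilityMeasure μ).some)
  have hoeffding := hasSubgaussianMGF_of_mem_Icc hw (a := -a) (b := a)
    (Eventually.of_forall fun x => Set.mem_Icc.2 (abs_le.1 (hwa x)))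
  have hc : (((‖a - -a‖₊ / 2) ^ 2 : ℝ≥0) : ℝ) = a ^ 2 := by
    simp [← two_mul, abs_of_nonneg ha]
  have hmgf : mgf w μ 1 * mgf w μ (-1) ≤ Real.exp (a ^ 2) := by
    set m := μ[w]
    have hw_eq : w = fun x => (w x - m) + m := by funext; ring
    calc mgf w μ 1 * mgf w μ (-1)
        = mgf (fun x => w x - m) μ 1 * mgf (fun x => w x - m) μ (-1) := by
          conv_lhs => rw [hw_eq, mgf_add_const, mgf_add_const]
          rw [mul_mul_mul_comm, ← Real.exp_add]; simp
      _ ≤ Real.exp (a ^ 2 * 1 ^ 2 / 2) * Real.exp (a ^ 2 * (-1) ^ 2 / 2) := by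
          rw [← hc]
          exact mul_le_mul (hoeffding.mgf_le 1) (hoeffding.mgf_le (-1)) mgf_nonneg
            (Real.exp_pos _).le
      _ = Real.exp (a ^ 2) := by rw [← Real.exp_add]; ring_nf
  have hpos : ∀ t, 0 < mgf w μ t := fun t =>
    mgf_pos (integrable_exp_of_abs_le (hw.const_mul t).aestronglyMeasurable
      (a := |t| * a) fun x => by
        rw [abs_mul]; exact mul_le_mul_of_nonneg_left (hwa x) (abs_nonneg t))
  rw [cgf, cgf, ← Real.log_mul (hpos 1).ne' (hpos (-1)).ne', ← Real.log_exp (a ^ 2)]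
  exact Real.log_le_log (mul_pos (hpos 1) (hpos (-1))) hmgf

lemma abs_log_integral_exp_add_sub_le [IsProbabilityMeasure μ] (hw : AEStronglyMeasurable w μ)
    (hwa : ∀ x, |w x| ≤ a) :
    |Real.log (∫ x, Real.exp (g x + w x) ∂μ) - Real.log (∫ x, Real.exp (g x) ∂μ)| ≤ a := by
  by_cases hg : Integrable (fun x => Real.exp (g x)) μ
  · have := isProbabilityMeasure_tilted hg
    rw [log_integral_exp_add hg ((integrable_exp_add_iff hw hwa).2 hg), add_sub_cancel_left]
    exact abs_log_integral_exp_le (hw.mono_ac (tilted_absolutelyContinuous μ g)) hwa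
  · rw [integral_undef hg, integral_undef (mt (integrable_exp_add_iff hw hwa).1 hg)]
    simpa using (abs_nonneg _).trans (hwa (nonempty_of_isProbabilityMeasure μ).some)

lemma log_integral_exp_add_add_log_integral_exp_sub_le [IsProbabilityMeasure μ]
    (hw : AEStronglyMeasurable w μ) (hwa : ∀ x, |w x| ≤ a) :
    Real.log (∫ x, Real.exp (g x + w x) ∂μ) + Real.log (∫ x, Real.exp (g x - w x) ∂μ)
      - 2 * Real.log (∫ x, Real.exp (g x) ∂μ) ≤ a ^ 2 := by
  have hwa' : ∀ x, |-w x| ≤ a := by simpa using hwa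
  simp_rw [sub_eq_add_neg (g _)]
  by_cases hg : Integrable (fun x => Real.exp (g x)) μ
  · have := isProbabilityMeasure_tilted hg
    rw [log_integral_exp_add hg ((integrable_exp_add_iff hw hwa).2 hg),
      log_integral_exp_add hg ((integrable_exp_add_iff (w := fun x => -w x) hw.neg hwa').2 hg)]
    have hcgf := cgf_one_add_cgf_neg_one_le
      (hw.mono_ac (tilted_absolutelyContinuous μ g)).aemeasurable hwa
    simp only [cgf, mgf, one_mul, neg_one_mul] at hcgf
    linarith
  · rw [integral_undef hg, integral_undef (mt (integrable_exp_add_iff hw hwa).1 hg),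
      integral_undef (mt (integrable_exp_add_iff (w := fun x => -w x) hw.neg hwa').1 hg)]
    simpa using sq_nonneg a

end LogIntegralExp

section Fourier

variable {d : ℕ}

lemma norm_phiF (l : Lam d) (x : Fin d → ℝ) : ‖phiF l x‖ = 1 := by
  have h : 2 * (Real.pi : ℂ) * I * ∑ i, (l.1 i : ℂ) * (x i : ℂ)
      = ((2 * Real.pi * ∑ i, (l.1 i : ℝ) * x i : ℝ) : ℂ) * I := by
    push_cast; ring
  rw [phiF, h, norm_exp_ofReal_mul_I]

lemma summable_norm_coeffL (θ : SymmL1 d) : Summable fun l => ‖coeffL θ l‖ := by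
  simpa [coeffL] using (lp.memℓp (θ : lp (fun _ : Lam d => ℂ) 1)).summable (by norm_num)

lemma norm_eq_tsum_norm_coeffL (θ : SymmL1 d) : ‖θ‖ = ∑' l, ‖coeffL θ l‖ := by
  change ‖(θ : lp (fun _ : Lam d => ℂ) 1)‖ = _
  simp [lp.norm_eq_tsum_rpow (by norm_num : (0:ℝ) < (1 : ENNReal).toReal), coeffL]

lemma summable_coeffL_mul_phiF (θ : SymmL1 d) (x : Fin d → ℝ) :
    Summable fun l => coeffL θ l * phiF l x :=
  Summable.of_norm (by simpa [norm_phiF] using summable_norm_coeffL θ)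

lemma abs_uFun_le (θ : SymmL1 d) (x : Fin d → ℝ) : |uFun θ x| ≤ ‖θ‖ := by
  rw [norm_eq_tsum_norm_coeffL]
  calc |uFun θ x| ≤ ‖∑' l, coeffL θ l * phiF l x‖ := abs_re_le_norm _
    _ ≤ ∑' l, ‖coeffL θ l * phiF l x‖ :=
      norm_tsum_le_tsum_norm (by simpa [norm_phiF] using summable_norm_coeffL θ)
    _ = ∑' l, ‖coeffL θ l‖ := by simp [norm_phiF]

lemma uFun_sub (θ η : SymmL1 d) (x : Fin d → ℝ) :
    uFun (θ - η) x = uFun θ x - uFun η x := by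
  rw [uFun, uFun, uFun, ← sub_re,
    ← (summable_coeffL_mul_phiF θ x).tsum_sub (summable_coeffL_mul_phiF η x)]
  simp [coeffL, sub_mul]

lemma uFun_add (θ η : SymmL1 d) (x : Fin d → ℝ) :
    uFun (θ + η) x = uFun θ x + uFun η x := by
  linarith [add_sub_cancel_right θ η ▸ uFun_sub (θ + η) η x]

lemma continuous_uFun (θ : SymmL1 d) : Continuous (uFun θ) :=
  continuous_re.comp <| continuous_tsum (fun l => continuous_const.mul
    (Complex.continuous_exp.comp (by fun_prop))) (summable_norm_coeffL θ)
    (fun l x => by simp [norm_phiF])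

instance : IsProbabilityMeasure (muU d) :=
  ⟨by simp [muU, cube, Real.volume_Icc_pi]⟩

end Fourier

section Entropic

variable {d : ℕ} {ε : ℝ} {c : (Fin d → ℝ) → (Fin d → ℝ) → ℝ}

lemma abs_uFun_div_le (hε : 0 < ε) (θ : SymmL1 d) (x : Fin d → ℝ) :
    |uFun θ x / ε| ≤ ‖θ‖ / ε := by
  rw [abs_div, abs_of_pos hε]
  exact div_le_div_of_nonneg_right (abs_uFun_le θ x) hε.le

lemma aestronglyMeasurable_uFun_div (θ : SymmL1 d) (μ : Measure (Fin d → ℝ)) :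
    AEStronglyMeasurable (fun x => uFun θ x / ε) μ :=
  ((continuous_uFun θ).div_const ε).aestronglyMeasurable

lemma abs_hEps_sub_hEps_le (hε : 0 < ε) (θ η : SymmL1 d) (y : Fin d → ℝ) :
    |hEps ε c θ y - hEps ε c η y| ≤ ‖θ - η‖ := by
  have hsplit : ∀ x, (uFun θ x - c x y) / ε = (uFun η x - c x y) / ε + uFun (θ - η) x / ε := by
    intro x; rw [uFun_sub]; ring
  have key := abs_log_integral_exp_add_sub_le (μ := muU d) (g := fun x => (uFun η x - c x y) / ε)
    (aestronglyMeasurable_uFun_div (θ - η) _) (abs_uFun_div_le hε (θ - η))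
  simp only [hEps, hsplit]
  rw [add_sub_add_right_eq_sub, ← mul_sub, abs_mul, abs_of_pos hε]
  calc _ ≤ ε * (‖θ - η‖ / ε) := mul_le_mul_of_nonneg_left key hε.le
    _ = ‖θ - η‖ := mul_div_cancel₀ _ hε.ne'

lemma hEps_add_add_hEps_sub_le (hε : 0 < ε) (η δ : SymmL1 d) (y : Fin d → ℝ) :
    hEps ε c (η + δ) y + hEps ε c (η - δ) y - 2 * hEps ε c η y ≤ ‖δ‖ ^ 2 / ε := by
  have hadd : ∀ x, (uFun (η + δ) x - c x y) / ε = (uFun η x - c x y) / ε + uFun δ x / ε := by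
    intro x; rw [uFun_add]; ring
  have hsub : ∀ x, (uFun (η - δ) x - c x y) / ε = (uFun η x - c x y) / ε - uFun δ x / ε := by
    intro x; rw [uFun_sub]; ring
  have key := log_integral_exp_add_add_log_integral_exp_sub_le (μ := muU d)
    (g := fun x => (uFun η x - c x y) / ε)
    (aestronglyMeasurable_uFun_div δ _) (abs_uFun_div_le hε δ)
  simp only [hEps, hadd, hsub]
  calc _ = ε * (Real.log (∫ x, Real.exp ((uFun η x - c x y) / ε + uFun δ x / ε) ∂muU d)
        + Real.log (∫ x, Real.exp ((uFun η x - c x y) / ε - uFun δ x / ε) ∂muU d)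
        - 2 * Real.log (∫ x, Real.exp ((uFun η x - c x y) / ε) ∂muU d)) := by ring
    _ ≤ ε * (‖δ‖ / ε) ^ 2 := mul_le_mul_of_nonneg_left key hε.le
    _ = ‖δ‖ ^ 2 / ε := by field_simp

variable {ν : Measure (Fin d → ℝ)}

lemma aestronglyMeasurable_hEps [SFinite ν]
    (hc : AEStronglyMeasurable (fun p : (Fin d → ℝ) × (Fin d → ℝ) => c p.1 p.2)
      ((muU d).prod ν)) (θ : SymmL1 d) :
    AEStronglyMeasurable (hEps ε c θ) ν := by
  have hexp : AEMeasurable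
      (fun p : (Fin d → ℝ) × (Fin d → ℝ) => Real.exp ((uFun θ p.2 - c p.2 p.1) / ε))
      (ν.prod (muU d)) :=
    Real.measurable_exp.comp_aemeasurable
      ((((continuous_uFun θ).comp continuous_snd).aemeasurable.sub
        hc.prod_swap.aemeasurable).div_const ε)
  exact ((Real.measurable_log.comp_aemeasurable
    hexp.aestronglyMeasurable.integral_prod_right'.aemeasurable).const_mul ε
    |>.add_const ε).aestronglyMeasurable

lemma integrable_hEps_iff [IsFiniteMeasure ν] (hε : 0 < ε)
    (hc : AEStronglyMeasurable (fun p : (Fin d → ℝ) × (Fin d → ℝ) => c p.1 p.2)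
      ((muU d).prod ν)) (θ η : SymmL1 d) :
    Integrable (hEps ε c θ) ν ↔ Integrable (hEps ε c η) ν := by
  have transfer : ∀ θ η : SymmL1 d, Integrable (hEps ε c η) ν → Integrable (hEps ε c θ) ν := by
    intro θ η hη
    have hdiff : Integrable (fun y => hEps ε c θ y - hEps ε c η y) ν :=
      (integrable_const ‖θ - η‖).mono'
        ((aestronglyMeasurable_hEps hc θ).sub (aestronglyMeasurable_hEps hc η))
        (ae_of_all _ fun y => abs_hEps_sub_hEps_le hε θ η y)
    exact (hdiff.add hη).congr (ae_of_all _ fun y => by simp)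
  exact ⟨transfer η θ, transfer θ η⟩

lemma HEps_add_add_HEps_sub_le [IsProbabilityMeasure ν] (hε : 0 < ε)
    (hc : AEStronglyMeasurable (fun p : (Fin d → ℝ) × (Fin d → ℝ) => c p.1 p.2)
      ((muU d).prod ν)) (η δ : SymmL1 d) :
    HEps ε c ν (η + δ) + HEps ε c ν (η - δ) - 2 * HEps ε c ν η ≤ ‖δ‖ ^ 2 / ε := by
  have hadd := integrable_hEps_iff hε hc (η + δ) η
  have hsub := integrable_hEps_iff hε hc (η - δ) η
  unfold HEps
  by_cases hη : Integrable (hEps ε c η) ν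
  · have hplus := hadd.2 hη
    have hminus := hsub.2 hη
    have hsum : Integrable (fun y => hEps ε c (η + δ) y + hEps ε c (η - δ) y) ν := hplus.add hminus
    have htwice : Integrable (fun y => 2 * hEps ε c η y) ν := hη.const_mul 2
    have hmono : ∫ y, (hEps ε c (η + δ) y + hEps ε c (η - δ) y - 2 * hEps ε c η y) ∂ν
        ≤ ∫ _, ‖δ‖ ^ 2 / ε ∂ν :=
      integral_mono (hsum.sub htwice) (integrable_const _)
        fun y => hEps_add_add_hEps_sub_le hε η δ y
    rw [integral_sub hsum htwice, integral_add hplus hminus, integral_const_mul] at hmono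
    simpa using hmono
  · rw [integral_undef hη, integral_undef (mt hadd.1 hη), integral_undef (mt hsub.1 hη)]
    simp only [add_zero, mul_zero, sub_zero]
    positivity

end Entropic

theorem statement5_general
    (d : ℕ) (ε : ℝ) (hε : 0 < ε)
    (ν : Measure (Fin d → ℝ)) [IsProbabilityMeasure ν]
    (c : (Fin d → ℝ) → (Fin d → ℝ) → ℝ)
    (hc_int : Integrable (fun p : (Fin d → ℝ) × (Fin d → ℝ) => c p.1 p.2) ((muU d).prod ν))
    (θε : SymmL1 d) (hmin : ∀ θ : SymmL1 d, HEps ε c ν θε ≤ HEps ε c ν θ) :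
    ∀ θ : SymmL1 d, HEps ε c ν θ - HEps ε c ν θε ≤ (1 / ε) * ‖θ - θε‖ ^ 2 := by
  intro θ
  have hsecond := HEps_add_add_HEps_sub_le hε hc_int.aestronglyMeasurable θε (θ - θε)
  rw [add_sub_cancel] at hsecond
  have hreflected := hmin (θε - (θ - θε))
  rw [one_div_mul_eq_div]
  linarith

/-- quadratic upper bound at the minimizer.
If `θ^ε` minimizes `H_ε` over `ℓ̄₁(Λ)`, then for all `θ`,
`H_ε(θ) − H_ε(θ^ε) ≤ (1/ε) ‖θ − θ^ε‖²_{ℓ1}`. -/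
theorem statement5
    (d : ℕ) (hd : 0 < d) (ε : ℝ) (hε : 0 < ε)
    (Y : Set (Fin d → ℝ)) (ν : Measure (Fin d → ℝ)) [IsProbabilityMeasure ν]
    (hνY : ν Yᶜ = 0)
    (c : (Fin d → ℝ) → (Fin d → ℝ) → ℝ)
    (hc_lsc : LowerSemicontinuousOn (fun p : (Fin d → ℝ) × (Fin d → ℝ) => c p.1 p.2)
      (cube d ×ˢ Y))
    (hc_int : Integrable (fun p : (Fin d → ℝ) × (Fin d → ℝ) => c p.1 p.2) ((muU d).prod ν))
    (θε : SymmL1 d) (hmin : ∀ θ : SymmL1 d, HEps ε c ν θε ≤ HEps ε c ν θ) :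
    ∀ θ : SymmL1 d, HEps ε c ν θ - HEps ε c ν θε ≤ (1 / ε) * ‖θ - θε‖ ^ 2 :=
  statement5_general d ε hε ν c hc_int θε hmin

end
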